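/- Let L be the combinatorial Laplacian of a weighted graph G on N vertices, C ∈ ℝ^{n×N} a coarsening matrix with Π = Cᵀ C and Π^⊥ = I_N − Π, and L̃ = C L Cᵀ. Suppose λ_1 = 0, Π x_1 = x_1, C x_1 = x̃_1, and fix k with 2 ≤ k ≤ n − 1 and constants ε_2,…,ε_k ≥ 0 such that x_iᵀ Π L Π x_i ≤ (1 + ε_i) λ_i for all 2 ≤ i ≤ k. If λ̃_{k+1} > λ_k, then the quantity ϑ_k := Σ_{i=1}^{k} Σ_{j=k+1}^{n} (x̃_jᵀ C x_i)² satisfies ϑ_k ≤ Σ_{i=2}^{k} ( ε_i λ_i + λ_k ‖Π^⊥ x_i‖₂² ) / ( λ̃_{k+1} − λ_k ). -/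

import Mathlib

open Matrix

/-- The combinatorial Laplacian `L = D - W`. -/
def lap {N : ℕ} (W : Matrix (Fin N) (Fin N) ℝ) : Matrix (Fin N) (Fin N) ℝ :=
  Matrix.diagonal (fun i => ∑ j, W i j) - W

/-- `W` is the weight matrix of a weighted graph: symmetric, nonnegative, zero diagonal. -/
def IsWeightedGraph {N : ℕ} (W : Matrix (Fin N) (Fin N) ℝ) : Prop :=
  (∀ i j, W i j = W j i) ∧ (∀ i j, 0 ≤ W i j) ∧ (∀ i, W i i = 0)

/-- A coarsening matrix `C : ℝ^{n×N}`. -/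
def IsCoarsening {n N : ℕ} (C : Matrix (Fin n) (Fin N) ℝ) : Prop :=
  ∃ φ : Fin N → Fin n, Function.Surjective φ ∧
    ∀ i j, C i j =
      if φ j = i then
        (Real.sqrt ((Finset.univ.filter (fun j' : Fin N => φ j' = i)).card : ℝ))⁻¹
      else 0

section helpers
variable {m : ℕ} {v : Fin m → Fin m → ℝ}

lemma ortho_mat (h : ∀ i j, v i ⬝ᵥ v j = if i = j then (1:ℝ) else 0) :
    (Matrix.of v)ᵀ * Matrix.of v = 1 := by
  rw [mul_eq_one_comm]
  ext i j
  simpa [Matrix.mul_apply, dotProduct, Matrix.one_apply] using h i j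

lemma parseval (h : ∀ i j, v i ⬝ᵥ v j = if i = j then (1:ℝ) else 0) (w : Fin m → ℝ) :
    ∑ i, (v i ⬝ᵥ w) ^ 2 = w ⬝ᵥ w := by
  have h1 := ortho_mat h
  have : w ⬝ᵥ w = w ⬝ᵥ (((Matrix.of v)ᵀ * Matrix.of v) *ᵥ w) := by rw [h1, one_mulVec]
  rw [this, ← mulVec_mulVec, dotProduct_mulVec, vecMul_transpose]
  simp [dotProduct, mulVec, sq, mul_comm]

lemma spectral (h : ∀ i j, v i ⬝ᵥ v j = if i = j then (1:ℝ) else 0)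
    (A : Matrix (Fin m) (Fin m) ℝ) (μ : Fin m → ℝ)
    (hA : ∀ i, A *ᵥ v i = μ i • v i) (w : Fin m → ℝ) :
    w ⬝ᵥ (A *ᵥ w) = ∑ i, μ i * (v i ⬝ᵥ w) ^ 2 := by
  have h1 := ortho_mat h
  have key : A * (Matrix.of v)ᵀ = (Matrix.of v)ᵀ * Matrix.diagonal μ := by
    ext k i
    have := congrFun (hA i) k
    simpa [Matrix.mul_apply, mulVec, dotProduct, Matrix.diagonal, mul_comm] using this
  have : A *ᵥ w = ((Matrix.of v)ᵀ * Matrix.diagonal μ * Matrix.of v) *ᵥ w := by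
    rw [← key, Matrix.mul_assoc, h1, Matrix.mul_one]
  rw [this, ← mulVec_mulVec, ← mulVec_mulVec, dotProduct_mulVec, vecMul_transpose]
  simp only [dotProduct, mulVec, Matrix.diagonal_apply, ite_mul, zero_mul,
    Finset.sum_ite_eq, Finset.mem_univ, if_true]
  apply Finset.sum_congr rfl; intro i _; simp only [Matrix.of_apply]; ring

end helpers

lemma quad_transfer {n N : ℕ} (C : Matrix (Fin n) (Fin N) ℝ) (L : Matrix (Fin N) (Fin N) ℝ)
    (u : Fin n → ℝ) :
    (Cᵀ *ᵥ u) ⬝ᵥ (L *ᵥ (Cᵀ *ᵥ u)) = u ⬝ᵥ ((C * L * Cᵀ) *ᵥ u) := by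
  rw [mulVec_mulVec, mulVec_transpose, ← dotProduct_mulVec, mulVec_mulVec, ← Matrix.mul_assoc]

lemma coarsening_CCt {n N : ℕ} {C : Matrix (Fin n) (Fin N) ℝ} (hC : IsCoarsening C) :
    C * Cᵀ = 1 := by
  obtain ⟨φ, hsurj, hval⟩ := hC
  ext i i'
  rw [Matrix.mul_apply]
  by_cases hii : i = i'
  · subst hii
    set c := ((Finset.univ.filter (fun j' : Fin N => φ j' = i)).card : ℝ) with hc
    have hcard : (0:ℝ) < c := by
      obtain ⟨j, hj⟩ := hsurj i
      have : 0 < (Finset.univ.filter (fun j' : Fin N => φ j' = i)).card :=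
        Finset.card_pos.mpr ⟨j, by simp [hj]⟩
      rw [hc]; exact_mod_cast this
    have hterm : ∀ j, C i j * (Cᵀ) j i = if φ j = i then c⁻¹ else 0 := by
      intro j
      rw [Matrix.transpose_apply, hval i j]
      split
      · rw [← hc, ← Real.sqrt_inv, Real.mul_self_sqrt (by positivity)]
      · ring
    rw [Finset.sum_congr rfl (fun j _ => hterm j), ← Finset.sum_filter,
      Finset.sum_const, nsmul_eq_mul, ← hc, Matrix.one_apply_eq]
    field_simp
  · rw [Matrix.one_apply_ne hii]
    apply Finset.sum_eq_zero
    intro j _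
    rw [Matrix.transpose_apply, hval i j, hval i' j]
    by_cases h2 : φ j = i'
    · have h3 : ¬ φ j = i := fun h => hii (h.symm.trans h2)
      rw [if_neg h3, zero_mul]
    · rw [if_neg h2, mul_zero]

lemma interlace {n N : ℕ} (hn : n ≤ N)
    (L : Matrix (Fin N) (Fin N) ℝ)
    (lam : Fin N → ℝ) (x : Fin N → Fin N → ℝ)
    (hmono : Monotone lam)
    (hortho : ∀ i j, x i ⬝ᵥ x j = if i = j then (1:ℝ) else 0)
    (heig : ∀ i, L *ᵥ x i = lam i • x i)
    (C : Matrix (Fin n) (Fin N) ℝ) (hCCt : C * Cᵀ = 1)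
    (lamt : Fin n → ℝ) (xt : Fin n → Fin n → ℝ)
    (hmonot : Monotone lamt)
    (horthot : ∀ i j, xt i ⬝ᵥ xt j = if i = j then (1:ℝ) else 0)
    (heigt : ∀ i, (C * L * Cᵀ) *ᵥ xt i = lamt i • xt i)
    (j : Fin n) : lam ⟨(j : ℕ), lt_of_lt_of_le j.2 hn⟩ ≤ lamt j := by
  classical
  set jv := (j : ℕ) with hjv
  set B1 : Matrix (Fin jv) (Fin n) ℝ :=
    Matrix.of (fun i : Fin jv => C *ᵥ x ⟨(i : ℕ), by omega⟩) with hB1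
  set B2 : Matrix (Fin (n - 1 - jv)) (Fin n) ℝ :=
    Matrix.of (fun s : Fin (n - 1 - jv) => xt ⟨jv + 1 + (s : ℕ), by omega⟩) with hB2
  set g : (Fin n → ℝ) →ₗ[ℝ] (Fin jv → ℝ) × (Fin (n - 1 - jv) → ℝ) :=
    LinearMap.prod (Matrix.mulVecLin B1) (Matrix.mulVecLin B2) with hg
  have hnotinj : ¬ Function.Injective g := by
    intro hinj
    have := LinearMap.finrank_le_finrank_of_injective hinj
    simp [Module.finrank_prod, Module.finrank_pi] at this
    omega
  obtain ⟨w, hwker, hwne⟩ : ∃ w ∈ LinearMap.ker g, w ≠ 0 := by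
    rw [← Submodule.ne_bot_iff]
    intro hbot
    exact hnotinj (LinearMap.ker_eq_bot.mp hbot)
  have hg1 : ∀ i : Fin jv, (C *ᵥ x ⟨(i : ℕ), by omega⟩) ⬝ᵥ w = 0 := by
    intro i
    have := congrFun (congrArg Prod.fst (LinearMap.mem_ker.mp hwker)) i
    simp [hg, Matrix.mulVecLin_apply, mulVec, hB1] at this
    exact this
  have hg2 : ∀ t : Fin n, jv < (t : ℕ) → xt t ⬝ᵥ w = 0 := by
    intro t ht
    have hs : (t : ℕ) - 1 - jv < n - 1 - jv := by omega
    have := congrFun (congrArg Prod.snd (LinearMap.mem_ker.mp hwker)) ⟨(t : ℕ) - 1 - jv, hs⟩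
    simp [hg, Matrix.mulVecLin_apply, mulVec, hB2] at this
    have ht' : (⟨jv + 1 + ((t : ℕ) - 1 - jv), by omega⟩ : Fin n) = t := by
      apply Fin.ext; simp; omega
    rwa [ht'] at this
  have hpos : 0 < w ⬝ᵥ w := by
    have := (dotProduct_star_self_pos_iff (v := w)).mpr hwne
    simpa using this
  have hup : w ⬝ᵥ ((C * L * Cᵀ) *ᵥ w) ≤ lamt j * (w ⬝ᵥ w) := by
    rw [spectral horthot _ lamt heigt w, ← parseval horthot w, Finset.mul_sum]
    apply Finset.sum_le_sum
    intro t _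
    by_cases ht : (t : ℕ) ≤ jv
    · exact mul_le_mul_of_nonneg_right (hmonot (by rwa [Fin.le_def])) (sq_nonneg _)
    · rw [hg2 t (by omega)]; simp
  set vv : Fin N → ℝ := Cᵀ *ᵥ w with hvv
  have hquad : vv ⬝ᵥ (L *ᵥ vv) = w ⬝ᵥ ((C * L * Cᵀ) *ᵥ w) := quad_transfer C L w
  have hnorm : vv ⬝ᵥ vv = w ⬝ᵥ w := by
    rw [hvv, dotProduct_mulVec, vecMul_transpose, mulVec_mulVec, hCCt, one_mulVec]
  have hlow : lam ⟨jv, by omega⟩ * (w ⬝ᵥ w) ≤ w ⬝ᵥ ((C * L * Cᵀ) *ᵥ w) := by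
    rw [← hquad, spectral hortho L lam heig vv, ← hnorm, ← parseval hortho vv,
      Finset.mul_sum]
    apply Finset.sum_le_sum
    intro i _
    by_cases hi : (i : ℕ) < jv
    · have hzero : x i ⬝ᵥ vv = 0 := by
        have := hg1 ⟨(i : ℕ), hi⟩
        have hxi : x ⟨((⟨(i : ℕ), hi⟩ : Fin jv) : ℕ), by omega⟩ = x i := by
          congr 1
        rw [hxi] at this
        rw [hvv, dotProduct_mulVec, vecMul_transpose, this]
      rw [hzero]; simp
    · exact mul_le_mul_of_nonneg_right (hmono (by rw [Fin.le_def]; simp; omega)) (sq_nonneg _)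
  exact le_of_mul_le_mul_right (le_trans hlow hup) hpos


lemma sum_fin_filter_le {M : ℕ} (k : ℕ) (hkM : k < M) (F : Fin M → ℝ) :
    ∑ i ∈ Finset.univ.filter (fun i : Fin M => (i : ℕ) ≤ k), F i
      = ∑ t : Fin (k + 1), F ⟨(t : ℕ), lt_of_lt_of_le t.2 (by omega)⟩ := by
  refine Finset.sum_nbij' (i := fun (a : Fin M) => (⟨min (a : ℕ) k, by omega⟩ : Fin (k + 1)))
    (j := fun (t : Fin (k + 1)) => (⟨(t : ℕ), lt_of_lt_of_le t.2 (by omega)⟩ : Fin M))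
    ?_ ?_ ?_ ?_ ?_
  · intro a ha; exact Finset.mem_univ _
  · intro t _
    have ht := t.2
    simp only [Finset.mem_filter, Finset.mem_univ, true_and]
    omega
  · intro a ha
    simp only [Finset.mem_filter, Finset.mem_univ, true_and] at ha
    apply Fin.ext; simp; omega
  · intro t _
    have ht := t.2
    apply Fin.ext; simp; omega
  · intro a ha
    simp only [Finset.mem_filter, Finset.mem_univ, true_and] at ha
    congr 1
    apply Fin.ext; simp; omega

/-- first sinΘ bound: with `Π = CᵀC`, `Π^⊥ = I − Π`, `L̃ = C L Cᵀ`, `λ_1 = 0`,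
`Π x_1 = x_1`, `C x_1 = x̃_1`, and RSS-type inequalities `x_iᵀ Π L Π x_i ≤ (1+ε_i) λ_i` for
`2 ≤ i ≤ k`, if `λ̃_{k+1} > λ_k` then
`ϑ_k = Σ_{i≤k} Σ_{j>k} (x̃_jᵀ C x_i)² ≤ Σ_{2≤i≤k} (ε_i λ_i + λ_k ‖Π^⊥ x_i‖²)/(λ̃_{k+1} − λ_k)`.
Indices are 0-based: the 1-based `k` (with `2 ≤ k ≤ n−1`) is `kk + 1` here, i.e.
`1 ≤ kk` and `kk + 2 ≤ n`; 1-based `λ_k = lam ⟨kk⟩`, `λ̃_{k+1} = lamt ⟨kk+1⟩`. -/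
theorem coarsening_sin_theta_bound_one {n N : ℕ} (hn : n ≤ N)
    (W : Matrix (Fin N) (Fin N) ℝ) (hW : IsWeightedGraph W)
    (C : Matrix (Fin n) (Fin N) ℝ) (hC : IsCoarsening C)
    (lam : Fin N → ℝ) (x : Fin N → Fin N → ℝ)
    (hmono : Monotone lam)
    (hortho : ∀ i j, x i ⬝ᵥ x j = if i = j then (1 : ℝ) else 0)
    (heig : ∀ i, lap W *ᵥ x i = lam i • x i)
    (lamt : Fin n → ℝ) (xt : Fin n → Fin n → ℝ)
    (hmonot : Monotone lamt)
    (horthot : ∀ i j, xt i ⬝ᵥ xt j = if i = j then (1 : ℝ) else 0)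
    (heigt : ∀ i, (C * lap W * Cᵀ) *ᵥ xt i = lamt i • xt i)
    (kk : ℕ) (hkk : 1 ≤ kk) (hkn : kk + 2 ≤ n)
    (h0 : lam ⟨0, by omega⟩ = 0)
    (hfix : (Cᵀ * C) *ᵥ x ⟨0, by omega⟩ = x ⟨0, by omega⟩)
    (hCx1 : C *ᵥ x ⟨0, by omega⟩ = xt ⟨0, by omega⟩)
    (eps : Fin N → ℝ)
    (heps : ∀ i : Fin N, 1 ≤ (i : ℕ) → (i : ℕ) ≤ kk → 0 ≤ eps i)
    (hrss : ∀ i : Fin N, 1 ≤ (i : ℕ) → (i : ℕ) ≤ kk →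
      ((Cᵀ * C) *ᵥ x i) ⬝ᵥ (lap W *ᵥ ((Cᵀ * C) *ᵥ x i)) ≤ (1 + eps i) * lam i)
    (hgap : lam ⟨kk, by omega⟩ < lamt ⟨kk + 1, by omega⟩) :
    (∑ i ∈ Finset.univ.filter (fun i : Fin N => (i : ℕ) ≤ kk),
        ∑ j ∈ Finset.univ.filter (fun j : Fin n => kk < (j : ℕ)),
          (xt j ⬝ᵥ (C *ᵥ x i)) ^ 2)
      ≤ ∑ i ∈ Finset.univ.filter (fun i : Fin N => 1 ≤ (i : ℕ) ∧ (i : ℕ) ≤ kk),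
          (eps i * lam i +
            lam ⟨kk, by omega⟩ * (((1 - Cᵀ * C) *ᵥ x i) ⬝ᵥ ((1 - Cᵀ * C) *ᵥ x i))) /
          (lamt ⟨kk + 1, by omega⟩ - lam ⟨kk, by omega⟩) := by
  classical
  have hCCt : C * Cᵀ = 1 := coarsening_CCt hC
  have hkN : kk < N := by omega
  have hk1n : kk + 1 < n := by omega
  have h0N : 0 < N := by omega
  -- abbreviations (as plain functions, not `set`)
  have hgap0 : (0:ℝ) < lamt ⟨kk + 1, hk1n⟩ - lam ⟨kk, hkN⟩ := by
    have := hgap; linarith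
  rw [← Finset.sum_div, le_div_iff₀ hgap0]
  show (∑ i ∈ Finset.univ.filter (fun i : Fin N => (i : ℕ) ≤ kk),
        ∑ j ∈ Finset.univ.filter (fun j : Fin n => kk < (j : ℕ)),
          (xt j ⬝ᵥ (C *ᵥ x i)) ^ 2) * (lamt ⟨kk + 1, hk1n⟩ - lam ⟨kk, hkN⟩)
      ≤ ∑ i ∈ Finset.univ.filter (fun i : Fin N => 1 ≤ (i : ℕ) ∧ (i : ℕ) ≤ kk),
          (eps i * lam i +
            lam ⟨kk, hkN⟩ * (((1 - Cᵀ * C) *ᵥ x i) ⬝ᵥ ((1 - Cᵀ * C) *ᵥ x i)))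
  -- basic facts
  have hxx : ∀ i : Fin N, x i ⬝ᵥ x i = 1 := by
    intro i; simpa using hortho i i
  have hxtxt : ∀ j : Fin n, xt j ⬝ᵥ xt j = 1 := by
    intro j; simpa using horthot j j
  have hquadA : ∀ i : Fin N,
      ((Cᵀ * C) *ᵥ x i) ⬝ᵥ (lap W *ᵥ ((Cᵀ * C) *ᵥ x i))
        = ∑ j : Fin n, lamt j * (xt j ⬝ᵥ (C *ᵥ x i)) ^ 2 := by
    intro i
    rw [← mulVec_mulVec, quad_transfer, spectral horthot _ lamt heigt]
  have hnormA : ∀ i : Fin N,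
      (∑ j : Fin n, (xt j ⬝ᵥ (C *ᵥ x i)) ^ 2)
        = 1 - ((1 - Cᵀ * C) *ᵥ x i) ⬝ᵥ ((1 - Cᵀ * C) *ᵥ x i) := by
    intro i
    have e1 : ∑ j : Fin n, (xt j ⬝ᵥ (C *ᵥ x i)) ^ 2 = (C *ᵥ x i) ⬝ᵥ (C *ᵥ x i) :=
      parseval horthot _
    have e2 : ((1 - Cᵀ * C) *ᵥ x i) = x i - Cᵀ *ᵥ (C *ᵥ x i) := by
      rw [sub_mulVec, one_mulVec, ← mulVec_mulVec]
    have e3 : (x i) ⬝ᵥ (Cᵀ *ᵥ (C *ᵥ x i)) = (C *ᵥ x i) ⬝ᵥ (C *ᵥ x i) := by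
      rw [dotProduct_mulVec, vecMul_transpose]
    have e4 : (Cᵀ *ᵥ (C *ᵥ x i)) ⬝ᵥ (Cᵀ *ᵥ (C *ᵥ x i)) = (C *ᵥ x i) ⬝ᵥ (C *ᵥ x i) := by
      rw [dotProduct_mulVec, vecMul_transpose, mulVec_mulVec, hCCt, one_mulVec]
    have e5 : (Cᵀ *ᵥ (C *ᵥ x i)) ⬝ᵥ x i = (C *ᵥ x i) ⬝ᵥ (C *ᵥ x i) := by
      rw [dotProduct_comm]; exact e3
    have e6 : (x i - Cᵀ *ᵥ (C *ᵥ x i)) ⬝ᵥ (x i - Cᵀ *ᵥ (C *ᵥ x i))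
        = x i ⬝ᵥ x i - x i ⬝ᵥ (Cᵀ *ᵥ (C *ᵥ x i)) - (Cᵀ *ᵥ (C *ᵥ x i)) ⬝ᵥ x i
          + (Cᵀ *ᵥ (C *ᵥ x i)) ⬝ᵥ (Cᵀ *ᵥ (C *ᵥ x i)) := by
      rw [sub_dotProduct, dotProduct_sub, dotProduct_sub]; ring
    rw [e1, e2, e6, e3, e4, e5, hxx i]
    ring
  have hcol : ∀ j : Fin n, ∑ i : Fin N, (xt j ⬝ᵥ (C *ᵥ x i)) ^ 2 = 1 := by
    intro j
    have e0 : ∀ i : Fin N, xt j ⬝ᵥ (C *ᵥ x i) = x i ⬝ᵥ (Cᵀ *ᵥ xt j) := by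
      intro i
      rw [dotProduct_mulVec, ← mulVec_transpose, dotProduct_comm]
    calc ∑ i : Fin N, (xt j ⬝ᵥ (C *ᵥ x i)) ^ 2
        = ∑ i : Fin N, (x i ⬝ᵥ (Cᵀ *ᵥ xt j)) ^ 2 := by
          apply Finset.sum_congr rfl; intro i _; rw [e0 i]
      _ = (Cᵀ *ᵥ xt j) ⬝ᵥ (Cᵀ *ᵥ xt j) := parseval hortho _
      _ = 1 := by
          rw [dotProduct_mulVec, vecMul_transpose, mulVec_mulVec, hCCt, one_mulVec, hxtxt j]
  have hint : ∀ j : Fin n, lam ⟨(j : ℕ), lt_of_lt_of_le j.2 hn⟩ ≤ lamt j :=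
    interlace hn (lap W) lam x hmono hortho heig C hCCt lamt xt hmonot horthot heigt
  -- index sets
  set Ilo : Finset (Fin N) := Finset.univ.filter (fun i : Fin N => (i : ℕ) ≤ kk) with hIlo
  set Jhi : Finset (Fin n) := Finset.univ.filter (fun j : Fin n => kk < (j : ℕ)) with hJhi
  set Jlo : Finset (Fin n) := Finset.univ.filter (fun j : Fin n => (j : ℕ) ≤ kk) with hJlo
  set I1 : Finset (Fin N) :=
    Finset.univ.filter (fun i : Fin N => 1 ≤ (i : ℕ) ∧ (i : ℕ) ≤ kk) with hI1
  have hJsplit : ∀ F : Fin n → ℝ, ∑ j : Fin n, F j = ∑ j ∈ Jlo, F j + ∑ j ∈ Jhi, F j := by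
    intro F
    rw [hJlo, hJhi, ← Finset.sum_filter_add_sum_filter_not Finset.univ
      (fun j : Fin n => (j : ℕ) ≤ kk) F]
    congr 1
    apply Finset.sum_congr _ (fun _ _ => rfl)
    apply Finset.filter_congr
    intro j _
    simp only [not_le]
  -- per-i inequality
  have H1 : ∀ i ∈ Ilo,
      (∑ j ∈ Jhi, (xt j ⬝ᵥ (C *ᵥ x i)) ^ 2) * (lamt ⟨kk + 1, hk1n⟩ - lam ⟨kk, hkN⟩)
        + ∑ j ∈ Jlo, (lamt j - lam ⟨kk, hkN⟩) * (xt j ⬝ᵥ (C *ᵥ x i)) ^ 2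
        + lam ⟨kk, hkN⟩ * (1 - ((1 - Cᵀ * C) *ᵥ x i) ⬝ᵥ ((1 - Cᵀ * C) *ᵥ x i))
      ≤ ((Cᵀ * C) *ᵥ x i) ⬝ᵥ (lap W *ᵥ ((Cᵀ * C) *ᵥ x i)) := by
    intro i _
    have e7 : ∑ j : Fin n, (lamt j - lam ⟨kk, hkN⟩) * (xt j ⬝ᵥ (C *ᵥ x i)) ^ 2
        = ((Cᵀ * C) *ᵥ x i) ⬝ᵥ (lap W *ᵥ ((Cᵀ * C) *ᵥ x i))
          - lam ⟨kk, hkN⟩ * (1 - ((1 - Cᵀ * C) *ᵥ x i) ⬝ᵥ ((1 - Cᵀ * C) *ᵥ x i)) := by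
      simp only [sub_mul]
      rw [Finset.sum_sub_distrib, ← Finset.mul_sum, hnormA i, ← hquadA i]
    have e8 := hJsplit (fun j => (lamt j - lam ⟨kk, hkN⟩) * (xt j ⬝ᵥ (C *ᵥ x i)) ^ 2)
    have e9 : (∑ j ∈ Jhi, (xt j ⬝ᵥ (C *ᵥ x i)) ^ 2) * (lamt ⟨kk + 1, hk1n⟩ - lam ⟨kk, hkN⟩)
        ≤ ∑ j ∈ Jhi, (lamt j - lam ⟨kk, hkN⟩) * (xt j ⬝ᵥ (C *ᵥ x i)) ^ 2 := by
      rw [Finset.sum_mul]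
      apply Finset.sum_le_sum
      intro j hj
      have hjk : kk < (j : ℕ) := by
        rw [hJhi] at hj; simpa using hj
      have : lamt ⟨kk + 1, hk1n⟩ ≤ lamt j := by
        apply hmonot; rw [Fin.le_def]; simpa using hjk
      have h2 := sq_nonneg (xt j ⬝ᵥ (C *ᵥ x i))
      nlinarith
    rw [e8] at e7
    linarith
  -- sum over i ∈ Ilo
  have H2 : (∑ i ∈ Ilo, ∑ j ∈ Jhi, (xt j ⬝ᵥ (C *ᵥ x i)) ^ 2)
        * (lamt ⟨kk + 1, hk1n⟩ - lam ⟨kk, hkN⟩)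
        + ∑ j ∈ Jlo, (lamt j - lam ⟨kk, hkN⟩) * (∑ i ∈ Ilo, (xt j ⬝ᵥ (C *ᵥ x i)) ^ 2)
        + lam ⟨kk, hkN⟩
          * ∑ i ∈ Ilo, (1 - ((1 - Cᵀ * C) *ᵥ x i) ⬝ᵥ ((1 - Cᵀ * C) *ᵥ x i))
      ≤ ∑ i ∈ Ilo, ((Cᵀ * C) *ᵥ x i) ⬝ᵥ (lap W *ᵥ ((Cᵀ * C) *ᵥ x i)) := by
    have := Finset.sum_le_sum H1
    calc (∑ i ∈ Ilo, ∑ j ∈ Jhi, (xt j ⬝ᵥ (C *ᵥ x i)) ^ 2)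
        * (lamt ⟨kk + 1, hk1n⟩ - lam ⟨kk, hkN⟩)
        + ∑ j ∈ Jlo, (lamt j - lam ⟨kk, hkN⟩) * (∑ i ∈ Ilo, (xt j ⬝ᵥ (C *ᵥ x i)) ^ 2)
        + lam ⟨kk, hkN⟩
          * ∑ i ∈ Ilo, (1 - ((1 - Cᵀ * C) *ᵥ x i) ⬝ᵥ ((1 - Cᵀ * C) *ᵥ x i))
        = ∑ i ∈ Ilo,
          ((∑ j ∈ Jhi, (xt j ⬝ᵥ (C *ᵥ x i)) ^ 2) * (lamt ⟨kk + 1, hk1n⟩ - lam ⟨kk, hkN⟩)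
          + ∑ j ∈ Jlo, (lamt j - lam ⟨kk, hkN⟩) * (xt j ⬝ᵥ (C *ᵥ x i)) ^ 2
          + lam ⟨kk, hkN⟩ * (1 - ((1 - Cᵀ * C) *ᵥ x i) ⬝ᵥ ((1 - Cᵀ * C) *ᵥ x i))) := by
          rw [Finset.sum_add_distrib, Finset.sum_add_distrib, Finset.sum_mul, ← Finset.mul_sum]
          congr 1
          congr 1
          rw [Finset.sum_comm]
          apply Finset.sum_congr rfl
          intro j _
          rw [Finset.mul_sum]
      _ ≤ _ := this
  -- handle Ilo = insert 0 I1
  have hIins : Ilo = insert (⟨0, h0N⟩ : Fin N) I1 := by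
    rw [hIlo, hI1]
    ext i
    simp [Fin.ext_iff]
    omega
  have h0notin : (⟨0, h0N⟩ : Fin N) ∉ I1 := by
    rw [hI1]; simp
  -- values at i = 0
  have hpr0 : ((1 - Cᵀ * C) *ᵥ x ⟨0, h0N⟩) ⬝ᵥ ((1 - Cᵀ * C) *ᵥ x ⟨0, h0N⟩) = 0 := by
    have : (1 - Cᵀ * C) *ᵥ x ⟨0, h0N⟩ = 0 := by
      rw [sub_mulVec, one_mulVec, hfix, sub_self]
    rw [this, dotProduct_zero]
  have hQ0 : ((Cᵀ * C) *ᵥ x ⟨0, h0N⟩) ⬝ᵥ (lap W *ᵥ ((Cᵀ * C) *ᵥ x ⟨0, h0N⟩)) = 0 := by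
    rw [hfix, heig, dotProduct_smul, hxx, h0]
    simp
  -- bound on sum of Q
  have hQsum : ∑ i ∈ Ilo, ((Cᵀ * C) *ᵥ x i) ⬝ᵥ (lap W *ᵥ ((Cᵀ * C) *ᵥ x i))
      ≤ ∑ i ∈ I1, (1 + eps i) * lam i := by
    rw [hIins, Finset.sum_insert h0notin, hQ0, zero_add]
    apply Finset.sum_le_sum
    intro i hi
    rw [hI1] at hi
    simp only [Finset.mem_filter, Finset.mem_univ, true_and] at hi
    exact hrss i hi.1 hi.2
  -- column sums in [0,1]
  have hs01 : ∀ j : Fin n, 0 ≤ ∑ i ∈ Ilo, (xt j ⬝ᵥ (C *ᵥ x i)) ^ 2 ∧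
      ∑ i ∈ Ilo, (xt j ⬝ᵥ (C *ᵥ x i)) ^ 2 ≤ 1 := by
    intro j
    constructor
    · exact Finset.sum_nonneg (fun i _ => sq_nonneg _)
    · rw [← hcol j]
      apply Finset.sum_le_sum_of_subset_of_nonneg (Finset.subset_univ _)
      intro i _ _
      exact sq_nonneg _
  -- lower bound on the Jlo block
  have hblock : ∑ i ∈ Ilo, (lam i - lam ⟨kk, hkN⟩)
      ≤ ∑ j ∈ Jlo, (lamt j - lam ⟨kk, hkN⟩) * (∑ i ∈ Ilo, (xt j ⬝ᵥ (C *ᵥ x i)) ^ 2) := by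
    have hreindex : ∑ i ∈ Ilo, (lam i - lam ⟨kk, hkN⟩)
        = ∑ j ∈ Jlo, (lam ⟨(j : ℕ), lt_of_lt_of_le j.2 hn⟩ - lam ⟨kk, hkN⟩) := by
      rw [hIlo, hJlo, sum_fin_filter_le kk hkN (fun i => lam i - lam ⟨kk, hkN⟩),
        sum_fin_filter_le kk (by omega : kk < n)
          (fun j => lam ⟨(j : ℕ), lt_of_lt_of_le j.2 hn⟩ - lam ⟨kk, hkN⟩)]
    rw [hreindex]
    apply Finset.sum_le_sum
    intro j hj
    have hjk : (j : ℕ) ≤ kk := by rw [hJlo] at hj; simpa using hj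
    obtain ⟨hs0, hs1⟩ := hs01 j
    have hlj : lam ⟨(j : ℕ), lt_of_lt_of_le j.2 hn⟩ ≤ lam ⟨kk, hkN⟩ := by
      apply hmono; rw [Fin.le_def]; simpa using hjk
    have hintj := hint j
    nlinarith [mul_nonneg (sub_nonneg.mpr hs1)
        (sub_nonneg.mpr hlj),
      mul_nonneg hs0 (sub_nonneg.mpr hintj)]
  -- sums over Ilo split at 0
  have hprsum : ∑ i ∈ Ilo, (1 - ((1 - Cᵀ * C) *ᵥ x i) ⬝ᵥ ((1 - Cᵀ * C) *ᵥ x i))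
      = 1 + ∑ i ∈ I1, (1 - ((1 - Cᵀ * C) *ᵥ x i) ⬝ᵥ ((1 - Cᵀ * C) *ᵥ x i)) := by
    rw [hIins, Finset.sum_insert h0notin, hpr0]
    ring
  have hlamsum : ∑ i ∈ Ilo, (lam i - lam ⟨kk, hkN⟩)
      = - lam ⟨kk, hkN⟩ + ∑ i ∈ I1, (lam i - lam ⟨kk, hkN⟩) := by
    rw [hIins, Finset.sum_insert h0notin]
    have : lam (⟨0, h0N⟩ : Fin N) = 0 := h0
    rw [this]
    ring
  -- final merge
  have hAB : ∑ i ∈ I1, ((1 + eps i) * lam i) - ∑ i ∈ I1, (lam i - lam ⟨kk, hkN⟩)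
      - lam ⟨kk, hkN⟩ * ∑ i ∈ I1, (1 - ((1 - Cᵀ * C) *ᵥ x i) ⬝ᵥ ((1 - Cᵀ * C) *ᵥ x i))
      = ∑ i ∈ I1, (eps i * lam i
          + lam ⟨kk, hkN⟩ * (((1 - Cᵀ * C) *ᵥ x i) ⬝ᵥ ((1 - Cᵀ * C) *ᵥ x i))) := by
    rw [Finset.mul_sum, ← Finset.sum_sub_distrib, ← Finset.sum_sub_distrib]
    apply Finset.sum_congr rfl
    intro i _; ring
  rw [hprsum] at H2
  linarith [H2, hQsum, hblock, hlamsum, hAB]
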